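/- Let L be a {0,1}-valued random variable and let X, T', T_k be random variables with finite ranges on the same probability space (T' plays the role of the previous transcript and T_k of the next message). Assume that for every value t' of T', conditioned on T'=t' and L=0 the message T_k is independent of X, i.e. Pr(T_k=a | X=x, T'=t', L=0) = Pr(T_k=a | T'=t', L=0) whenever Pr(X=x, T'=t', L=0) > 0, and assume Pr(L=0 | X=x, T'=t', T_k=a) > 0 whenever Pr(X=x, T'=t', T_k=a) > 0. Then the conditional mutual information satisfies I(X; T_k | T') ≤ susp(X, T', T_k) − susp(X, T'). -/

import Mathlib

open Finset

/-- Probability of an event `E` under the probability mass function `p`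
on a finite sample space `Ω`. -/
noncomputable def Pr {Ω : Type*} [Fintype Ω] (p : Ω → ℝ) (E : Set Ω) : ℝ :=
  ∑ ω, E.indicator p ω

/-- Conditional probability `Pr(E | F)`. -/
noncomputable def cPr {Ω : Type*} [Fintype Ω] (p : Ω → ℝ) (E F : Set Ω) : ℝ :=
  Pr p (E ∩ F) / Pr p F

/-- The suspicion given a random variable `Yv`:
`susp(Y) = Σ_y Pr(Y=y) · (−log₂ Pr(L=0 | Y=y))`. -/
noncomputable def susp {Ω Y : Type*} [Fintype Ω] [Fintype Y] (p : Ω → ℝ)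
    (L : Ω → Bool) (Yv : Ω → Y) : ℝ :=
  ∑ y, Pr p {ω | Yv ω = y} * (-Real.logb 2 (cPr p {ω | L ω = false} {ω | Yv ω = y}))

/-- Mutual information (base 2) between two finite-valued random variables. -/
noncomputable def mutInfo {Ω S T : Type*} [Fintype Ω] [Fintype S] [Fintype T]
    (p : Ω → ℝ) (Xv : Ω → S) (Av : Ω → T) : ℝ :=
  ∑ x, ∑ a, Pr p {ω | Xv ω = x ∧ Av ω = a} *
    Real.logb 2 (Pr p {ω | Xv ω = x ∧ Av ω = a} /
      (Pr p {ω | Xv ω = x} * Pr p {ω | Av ω = a}))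

/-- Conditional Shannon entropy (base 2) `H(A | X)`. -/
noncomputable def condEntropy {Ω S T : Type*} [Fintype Ω] [Fintype S] [Fintype T]
    (p : Ω → ℝ) (Av : Ω → T) (Xv : Ω → S) : ℝ :=
  ∑ x, ∑ a, Pr p {ω | Xv ω = x ∧ Av ω = a} *
    Real.logb 2 (Pr p {ω | Xv ω = x} / Pr p {ω | Xv ω = x ∧ Av ω = a})

/-- Conditional mutual information (base 2) `I(X; A | Z)`. -/
noncomputable def condMutInfo {Ω S T U : Type*} [Fintype Ω] [Fintype S] [Fintype T] [Fintype U]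
    (p : Ω → ℝ) (Xv : Ω → S) (Av : Ω → T) (Zv : Ω → U) : ℝ :=
  ∑ z, ∑ x, ∑ a, Pr p {ω | Xv ω = x ∧ Av ω = a ∧ Zv ω = z} *
    Real.logb 2 ((Pr p {ω | Xv ω = x ∧ Av ω = a ∧ Zv ω = z} * Pr p {ω | Zv ω = z}) /
      (Pr p {ω | Xv ω = x ∧ Zv ω = z} * Pr p {ω | Av ω = a ∧ Zv ω = z}))

/-!
Each of the three quantities is an average over `ω` of a logarithm of fibre probabilities. At a
point `ω` of positive mass, with `x, t', a` the values of `X, T', Tk` there, the integrand of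
`I(X; Tk | T') - (susp(X, T', Tk) - susp(X, T'))` is
`log₂ (Pr(Tk = a | X = x, T' = t', L = 0) / Pr(Tk = a | T' = t'))`, and the independence hypothesis
replaces the numerator by `Pr(Tk = a | T' = t', L = 0)`. The integrand then depends on `(t', a)`
only, and averaging over `Tk` given `T' = t'` gives minus a Kullback–Leibler divergence, which is
nonpositive by Gibbs' inequality (`log x ≤ x - 1`).
-/

open Real

lemma Real.mul_log_div_le_sub {r q : ℝ} (hr : 0 ≤ r) (hq : 0 ≤ q) (hrq : 0 < r → 0 < q) :
    r * log (q / r) ≤ q - r := by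
  rcases hr.eq_or_lt with rfl | hr
  · simpa using hq
  replace hq := hrq hr
  calc r * log (q / r) ≤ r * (q / r - 1) := by gcongr; exact log_le_sub_one_of_pos (by positivity)
    _ = q - r := by field_simp

section

variable {Ω : Type*} [Fintype Ω] {p : Ω → ℝ}

lemma Pr_nonneg (hp : ∀ ω, 0 ≤ p ω) (E : Set Ω) : 0 ≤ Pr p E :=
  sum_nonneg fun ω _ => Set.indicator_nonneg (fun ω _ => hp ω) ω

lemma Pr_mono (hp : ∀ ω, 0 ≤ p ω) {E F : Set Ω} (h : E ⊆ F) : Pr p E ≤ Pr p F :=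
  sum_le_sum fun ω _ => Set.indicator_le_indicator_of_subset h hp ω

lemma le_Pr_of_mem (hp : ∀ ω, 0 ≤ p ω) {E : Set Ω} {ω : Ω} (h : ω ∈ E) : p ω ≤ Pr p E :=
  calc p ω = E.indicator p ω := (Set.indicator_of_mem h p).symm
    _ ≤ Pr p E := single_le_sum (fun ω _ => Set.indicator_nonneg (fun ω _ => hp ω) ω) (mem_univ ω)

lemma exists_mem_pos_of_Pr_pos {E : Set Ω} (h : 0 < Pr p E) : ∃ ω ∈ E, 0 < p ω := by
  obtain ⟨ω, -, hω⟩ := exists_lt_of_sum_lt (by simpa [Pr] using h :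
    ∑ _ω : Ω, (0 : ℝ) < ∑ ω, E.indicator p ω)
  have hmem : ω ∈ E := by
    by_contra hn
    simp [hn] at hω
  exact ⟨ω, hmem, by simpa [hmem] using hω⟩

lemma Pr_inter_pos_of_cPr_pos (hp : ∀ ω, 0 ≤ p ω) {E F : Set Ω} (h : 0 < cPr p E F) :
    0 < Pr p (E ∩ F) := by
  by_contra! hn
  exact h.not_ge (div_nonpos_of_nonpos_of_nonneg hn (Pr_nonneg hp F))

lemma sum_Pr_fiber_mul {β : Type*} [Fintype β] (Y : Ω → β) (f : β → ℝ) :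
    ∑ y, Pr p {ω | Y ω = y} * f y = ∑ ω, p ω * f (Y ω) := by
  simp only [Pr, sum_mul]
  rw [sum_comm]
  refine sum_congr rfl fun ω _ => ?_
  rw [Fintype.sum_eq_single (Y ω) fun y hy => by simp [Set.indicator, Ne.symm hy]]
  simp [Set.indicator]

lemma sum_Pr_inter_fiber {β : Type*} [Fintype β] (E : Set Ω) (Y : Ω → β) :
    ∑ y, Pr p (E ∩ {ω | Y ω = y}) = Pr p E := by
  simp only [Pr]
  rw [sum_comm]
  refine sum_congr rfl fun ω _ => ?_
  rw [Fintype.sum_eq_single (Y ω) fun y hy => by simp [Set.indicator, Ne.symm hy]]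
  by_cases hω : ω ∈ E <;> simp [Set.indicator, hω]

lemma sum_Pr_inter_mul_logb_cPr_div_cPr_nonpos (hp : ∀ ω, 0 ≤ p ω) {β : Type*} [Fintype β]
    (Y : Ω → β) (E F : Set Ω)
    (hac : ∀ y, 0 < Pr p (E ∩ {ω | Y ω = y}) → 0 < Pr p (F ∩ {ω | Y ω = y})) :
    ∑ y, Pr p (E ∩ {ω | Y ω = y}) * logb 2 (cPr p {ω | Y ω = y} F / cPr p {ω | Y ω = y} E)
      ≤ 0 := by
  set r : β → ℝ := fun y => Pr p (E ∩ {ω | Y ω = y})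
  -- the law of `Y` given `F`, rescaled to total mass `Pr p E` (to `0` if `Pr p F = 0`)
  set q : β → ℝ := fun y => Pr p (F ∩ {ω | Y ω = y}) * Pr p E / Pr p F
  have hratio : ∀ y, cPr p {ω | Y ω = y} F / cPr p {ω | Y ω = y} E = q y / r y := by
    intro y
    simp only [cPr, q, r, Set.inter_comm {ω | Y ω = y}]
    rw [div_div_eq_mul_div]
    ring
  have hterm : ∀ y, r y * log (q y / r y) ≤ q y - r y := by
    intro y
    have hq : 0 ≤ q y := div_nonneg (mul_nonneg (Pr_nonneg hp _) (Pr_nonneg hp _)) (Pr_nonneg hp _)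
    refine Real.mul_log_div_le_sub (Pr_nonneg hp _) hq fun hr => ?_
    have hF := hac y hr
    exact div_pos (mul_pos hF (hr.trans_le (Pr_mono hp Set.inter_subset_left)))
      (hF.trans_le (Pr_mono hp Set.inter_subset_left))
  have hq_sum : ∑ y, q y ≤ ∑ y, r y := by
    simp only [q, r, ← sum_div, ← sum_mul, sum_Pr_inter_fiber]
    rcases eq_or_ne (Pr p F) 0 with h | h
    · simp [h, Pr_nonneg hp]
    · rw [mul_div_cancel_left₀ _ h]
  simp only [hratio, logb, ← mul_div_assoc, ← sum_div]
  refine div_nonpos_of_nonpos_of_nonneg ?_ (log_nonneg one_le_two)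
  calc ∑ y, r y * log (q y / r y) ≤ ∑ y, (q y - r y) := sum_le_sum fun y _ => hterm y
    _ ≤ 0 := by rw [sum_sub_distrib]; linarith

lemma sum_mul_logb_cPr_div_cPr_nonpos (hp : ∀ ω, 0 ≤ p ω) {β γ : Type*} [Fintype β] [Fintype γ]
    (W : Ω → γ) (Y : Ω → β) (Z : Set Ω)
    (hac : ∀ ω, 0 < p ω → 0 < Pr p (({ω' | W ω' = W ω} ∩ Z) ∩ {ω' | Y ω' = Y ω})) :
    ∑ ω, p ω * logb 2 (cPr p {ω' | Y ω' = Y ω} ({ω' | W ω' = W ω} ∩ Z) /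
      cPr p {ω' | Y ω' = Y ω} {ω' | W ω' = W ω}) ≤ 0 := by
  rw [← sum_Pr_fiber_mul (fun ω => (W ω, Y ω)) fun wy => logb 2
    (cPr p {ω | Y ω = wy.2} ({ω | W ω = wy.1} ∩ Z) / cPr p {ω | Y ω = wy.2} {ω | W ω = wy.1}),
    Fintype.sum_prod_type]
  refine sum_nonpos fun w _ => ?_
  simp only [Prod.mk.injEq]
  refine sum_Pr_inter_mul_logb_cPr_div_cPr_nonpos hp Y _ _ fun y hy => ?_
  obtain ⟨ω, ⟨rfl, rfl⟩, hω⟩ := exists_mem_pos_of_Pr_pos hy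
  exact hac ω hω

lemma susp_eq_sum {Y : Type*} [Fintype Y] (L : Ω → Bool) (Yv : Ω → Y) :
    susp p L Yv = ∑ ω, p ω * -logb 2 (cPr p {ω' | L ω' = false} {ω' | Yv ω' = Yv ω}) :=
  sum_Pr_fiber_mul Yv _

lemma condMutInfo_eq_sum {S T U : Type*} [Fintype S] [Fintype T] [Fintype U]
    (Xv : Ω → S) (Av : Ω → T) (Zv : Ω → U) :
    condMutInfo p Xv Av Zv = ∑ ω, p ω * logb 2
      (Pr p {ω' | Xv ω' = Xv ω ∧ Av ω' = Av ω ∧ Zv ω' = Zv ω} * Pr p {ω' | Zv ω' = Zv ω} /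
        (Pr p {ω' | Xv ω' = Xv ω ∧ Zv ω' = Zv ω} * Pr p {ω' | Av ω' = Av ω ∧ Zv ω' = Zv ω})) := by
  rw [← sum_Pr_fiber_mul (fun ω => (Zv ω, Xv ω, Av ω)) fun y => logb 2
    (Pr p {ω | Xv ω = y.2.1 ∧ Av ω = y.2.2 ∧ Zv ω = y.1} * Pr p {ω | Zv ω = y.1} /
      (Pr p {ω | Xv ω = y.2.1 ∧ Zv ω = y.1} * Pr p {ω | Av ω = y.2.2 ∧ Zv ω = y.1}))]
  simp only [condMutInfo, Fintype.sum_prod_type]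
  refine sum_congr rfl fun z _ => sum_congr rfl fun x _ => sum_congr rfl fun a _ => ?_
  congr 2
  ext ω
  simp only [Set.mem_ofPred_eq, Prod.mk.injEq]
  tauto

lemma logb_condMutInfo_sub_susp_increase_term (hp : ∀ ω, 0 ≤ p ω) {A B C Z : Set Ω} {ω : Ω}
    (hω : ω ∈ A ∩ (B ∩ C)) (hpω : 0 < p ω) (hZ : 0 < cPr p Z (A ∩ (C ∩ B)))
    (hind : 0 < Pr p (A ∩ (C ∩ Z)) → cPr p B (A ∩ (C ∩ Z)) = cPr p B (C ∩ Z)) :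
    logb 2 (Pr p (A ∩ (B ∩ C)) * Pr p C / (Pr p (A ∩ C) * Pr p (B ∩ C)))
        - (-logb 2 (cPr p Z (A ∩ (C ∩ B))) - -logb 2 (cPr p Z (A ∩ C)))
      = logb 2 (cPr p B (C ∩ Z) / cPr p B C) := by
  obtain ⟨hA, hB, hC⟩ := hω
  rw [Set.inter_comm C B] at hZ ⊢
  have hABC : 0 < Pr p (A ∩ (B ∩ C)) := hpω.trans_le (le_Pr_of_mem hp ⟨hA, hB, hC⟩)
  have hAC : 0 < Pr p (A ∩ C) := hpω.trans_le (le_Pr_of_mem hp ⟨hA, hC⟩)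
  have hBC : 0 < Pr p (B ∩ C) := hpω.trans_le (le_Pr_of_mem hp ⟨hB, hC⟩)
  have hC : 0 < Pr p C := hpω.trans_le (le_Pr_of_mem hp hC)
  have hZABC := Pr_inter_pos_of_cPr_pos hp hZ
  have hZAC : 0 < Pr p (A ∩ (C ∩ Z)) :=
    hZABC.trans_le (Pr_mono hp fun _ h => ⟨h.2.1, h.2.2.2, h.1⟩)
  have hZBC : 0 < Pr p (B ∩ (C ∩ Z)) :=
    hZABC.trans_le (Pr_mono hp fun _ h => ⟨h.2.2.1, h.2.2.2, h.1⟩)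
  have hZC : 0 < Pr p (C ∩ Z) := hZBC.trans_le (Pr_mono hp Set.inter_subset_right)
  replace hind := hind hZAC
  have hZABC_eq : B ∩ (A ∩ (C ∩ Z)) = Z ∩ (A ∩ (B ∩ C)) := by
    ext; simp only [Set.mem_inter_iff]; tauto
  have hZAC_eq : Z ∩ (A ∩ C) = A ∩ (C ∩ Z) := by
    ext; simp only [Set.mem_inter_iff]; tauto
  simp only [cPr, hZABC_eq, hZAC_eq] at hind ⊢
  rw [← hind, neg_sub_neg, sub_sub_eq_add_sub, ← logb_mul (by positivity) (by positivity),
    ← logb_div (by positivity) (by positivity)]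
  congr 1
  field_simp

lemma condMutInfo_sub_susp_increase_eq {S U M : Type*} [Fintype S] [Fintype U] [Fintype M]
    (hp : ∀ ω, 0 ≤ p ω)
    (X : Ω → S) (T' : Ω → U) (Tk : Ω → M) (L : Ω → Bool)
    (hindep : ∀ (t' : U) (a : M) (x : S),
      0 < Pr p {ω | X ω = x ∧ T' ω = t' ∧ L ω = false} →
      cPr p {ω | Tk ω = a} {ω | X ω = x ∧ T' ω = t' ∧ L ω = false} =
        cPr p {ω | Tk ω = a} {ω | T' ω = t' ∧ L ω = false})
    (hZ : ∀ ω, 0 < p ω → 0 < cPr p {ω' | L ω' = false}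
      {ω' | X ω' = X ω ∧ T' ω' = T' ω ∧ Tk ω' = Tk ω}) :
    condMutInfo p X Tk T' -
        (susp p L (fun ω => (X ω, T' ω, Tk ω)) - susp p L (fun ω => (X ω, T' ω))) =
      ∑ ω, p ω * logb 2 (cPr p {ω' | Tk ω' = Tk ω} {ω' | T' ω' = T' ω ∧ L ω' = false} /
        cPr p {ω' | Tk ω' = Tk ω} {ω' | T' ω' = T' ω}) := by
  rw [condMutInfo_eq_sum, susp_eq_sum, susp_eq_sum, ← sum_sub_distrib, ← sum_sub_distrib]
  refine sum_congr rfl fun ω _ => ?_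
  rcases (hp ω).eq_or_lt with h0 | hω
  · simp [← h0]
  rw [← mul_sub, ← mul_sub]
  simp only [Prod.mk.injEq]
  congr 1
  exact logb_condMutInfo_sub_susp_increase_term hp (A := {ω' | X ω' = X ω})
    (B := {ω' | Tk ω' = Tk ω}) (C := {ω' | T' ω' = T' ω}) (Z := {ω' | L ω' = false})
    ⟨rfl, rfl, rfl⟩ hω (hZ ω hω) (hindep _ _ _)

end

theorem cond_info_le_susp_increase_general {Ω S U M : Type*}
    [Fintype Ω] [Fintype S] [Fintype U] [Fintype M]
    (p : Ω → ℝ) (hp : ∀ ω, 0 ≤ p ω)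
    (X : Ω → S) (T' : Ω → U) (Tk : Ω → M) (L : Ω → Bool)
    (hindep : ∀ (t' : U) (a : M) (x : S),
      0 < Pr p {ω | X ω = x ∧ T' ω = t' ∧ L ω = false} →
      cPr p {ω | Tk ω = a} {ω | X ω = x ∧ T' ω = t' ∧ L ω = false} =
        cPr p {ω | Tk ω = a} {ω | T' ω = t' ∧ L ω = false})
    (hpos : ∀ (x : S) (t' : U) (a : M),
      0 < Pr p {ω | X ω = x ∧ T' ω = t' ∧ Tk ω = a} →
      0 < cPr p {ω | L ω = false} {ω | X ω = x ∧ T' ω = t' ∧ Tk ω = a}) :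
    condMutInfo p X Tk T' ≤
      susp p L (fun ω => (X ω, T' ω, Tk ω)) - susp p L (fun ω => (X ω, T' ω)) := by
  have hZ : ∀ ω, 0 < p ω → 0 < cPr p {ω' | L ω' = false}
      {ω' | X ω' = X ω ∧ T' ω' = T' ω ∧ Tk ω' = Tk ω} := fun ω hω =>
    hpos _ _ _ (hω.trans_le (le_Pr_of_mem hp ⟨rfl, rfl, rfl⟩))
  rw [← sub_nonpos, condMutInfo_sub_susp_increase_eq hp X T' Tk L hindep hZ]
  exact sum_mul_logb_cPr_div_cPr_nonpos hp T' Tk {ω | L ω = false} fun ω hω =>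
    (Pr_inter_pos_of_cPr_pos hp (hZ ω hω)).trans_le
      (Pr_mono hp fun _ h => ⟨⟨h.2.2.1, h.1⟩, h.2.2.2⟩)

/-- for a next message `Tk` sent after previous transcript `T'`,
`I(X; T_k | T') ≤ susp(X, T', T_k) − susp(X, T')`. -/
theorem cond_info_le_susp_increase {Ω S U M : Type*}
    [Fintype Ω] [Fintype S] [Fintype U] [Fintype M]
    (p : Ω → ℝ) (hp : ∀ ω, 0 ≤ p ω) (hp1 : ∑ ω, p ω = 1)
    (X : Ω → S) (T' : Ω → U) (Tk : Ω → M) (L : Ω → Bool)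
    (hindep : ∀ (t' : U) (a : M) (x : S),
      0 < Pr p {ω | X ω = x ∧ T' ω = t' ∧ L ω = false} →
      cPr p {ω | Tk ω = a} {ω | X ω = x ∧ T' ω = t' ∧ L ω = false} =
        cPr p {ω | Tk ω = a} {ω | T' ω = t' ∧ L ω = false})
    (hpos : ∀ (x : S) (t' : U) (a : M),
      0 < Pr p {ω | X ω = x ∧ T' ω = t' ∧ Tk ω = a} →
      0 < cPr p {ω | L ω = false} {ω | X ω = x ∧ T' ω = t' ∧ Tk ω = a}) :
    condMutInfo p X Tk T' ≤
      susp p L (fun ω => (X ω, T' ω, Tk ω)) - susp p L (fun ω => (X ω, T' ω)) :=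
  cond_info_le_susp_increase_general p hp X T' Tk L hindep hpos
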